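/- Let r, m, ℓ be positive integers with r ≥ 2, 2^m > r and 2^{m+ℓ} > r². Let z be an integer with 0 ≤ z < r, let j = j₀(z) = ⌊2^{m+ℓ}·z/r⌉, and let d = gcd(r, z). Let 𝓛 ⊂ ℝ² be the set of all integer linear combinations of the vectors (j, 1/2) and (2^{m+ℓ}, 0), and let u = ((r·j − 2^{m+ℓ}·z)/d, r/(2d)) ∈ 𝓛. Then u is a shortest nonzero vector of 𝓛, and it is unique up to sign: every w ∈ 𝓛 with w ∉ {u, −u, 0} has Euclidean norm strictly greater than ‖u‖. -/

import Mathlib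

/-- The lattice spanned by `(j, 1/2)` and `(2^{m+ℓ}, 0)`, i.e.\ the set of all
integer linear combinations of these two vectors, as a subset of `ℝ × ℝ`. -/
def ShorLattice (j : ℤ) (m ℓ : ℕ) : Set (ℝ × ℝ) :=
  {v | ∃ a b : ℤ, v = (a : ℝ) • ((j : ℝ), (1 : ℝ) / 2) +
    (b : ℝ) • ((2 ^ (m + ℓ) : ℝ), (0 : ℝ))}

/-- The Euclidean norm on `ℝ × ℝ`. -/
noncomputable def enorm2 (v : ℝ × ℝ) : ℝ :=
  Real.sqrt (v.1 ^ 2 + v.2 ^ 2)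

lemma smul_pair (a b jj N : ℝ) :
    a • ((jj : ℝ), (1 : ℝ) / 2) + b • ((N : ℝ), (0 : ℝ)) = (a * jj + b * N, a / 2) := by
  simp [Prod.ext_iff]; ring

lemma key_ineq (r N w1 a k E : ℝ) (hr : 2 ≤ r) (hN : r ^ 2 < N)
    (hE : |E| ≤ r / 2) (hk : 1 ≤ |k|) (hX : r * w1 = N * k + a * E) :
    r ^ 2 / 2 < w1 ^ 2 + a ^ 2 / 4 := by
  have hN0 : (0 : ℝ) ≤ N := by nlinarith
  have h1 : N ≤ |N * k| := by
    rw [abs_mul, abs_of_nonneg hN0]; nlinarith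
  have h2 : |N * k| ≤ |r * w1| + |a| * (r / 2) := by
    have ha : |N * k| ≤ |r * w1| + |a * E| := by
      calc |N * k| = |r * w1 - a * E| := by rw [hX]; ring_nf
        _ ≤ |r * w1| + |a * E| := abs_sub _ _
    have hb : |a * E| ≤ |a| * (r / 2) := by
      rw [abs_mul]; exact mul_le_mul_of_nonneg_left hE (abs_nonneg a)
    linarith
  have h3 : N ≤ |r * w1| + |a| * (r / 2) := le_trans h1 h2
  have h4 : N ^ 2 ≤ (|r * w1| + |a| * (r / 2)) ^ 2 := by
    nlinarith [abs_nonneg (r * w1), abs_nonneg a]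
  have h5 : (|r * w1| + |a| * (r / 2)) ^ 2 ≤ 2 * ((r * w1) ^ 2 + (a * (r / 2)) ^ 2) := by
    nlinarith [sq_nonneg (|r * w1| - |a| * (r / 2)), sq_abs (r * w1), sq_abs a]
  have h6 : r ^ 4 < 2 * ((r * w1) ^ 2 + (a * (r / 2)) ^ 2) := by nlinarith
  have hr2 : (0 : ℝ) < r ^ 2 := by nlinarith
  nlinarith [h6, hr2]

set_option maxHeartbeats 1600000 in
theorem stmt_13 (r m ℓ : ℕ) (hr : 2 ≤ r) (hm : 0 < m) (hℓ : 0 < ℓ)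
    (hrm : r < 2 ^ m) (hrml : r ^ 2 < 2 ^ (m + ℓ))
    (z : ℕ) (hz : z < r)
    (j : ℤ) (hj : j = round ((2 ^ (m + ℓ) * (z : ℝ)) / (r : ℝ)))
    (d : ℕ) (hd : d = Nat.gcd r z)
    (u : ℝ × ℝ)
    (hu : u = (((r : ℝ) * (j : ℝ) - 2 ^ (m + ℓ) * (z : ℝ)) / (d : ℝ),
      (r : ℝ) / (2 * (d : ℝ)))) :
    u ∈ ShorLattice j m ℓ ∧ u ≠ 0 ∧
      (∀ w ∈ ShorLattice j m ℓ, w ≠ 0 → enorm2 u ≤ enorm2 w) ∧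
      (∀ w ∈ ShorLattice j m ℓ, w ≠ u → w ≠ -u → w ≠ 0 → enorm2 u < enorm2 w) := by
  have hr0 : (0 : ℝ) < r := by exact_mod_cast (show 0 < r by omega)
  have hdpos : 0 < d := by
    subst hd; exact Nat.gcd_pos_of_pos_left z (by omega)
  have hdR : (0 : ℝ) < d := by exact_mod_cast hdpos
  have hdr : d ∣ r := hd ▸ Nat.gcd_dvd_left r z
  have hdz : d ∣ z := hd ▸ Nat.gcd_dvd_right r z
  obtain ⟨rd, zd, hrdd, hzdd, cop⟩ :
      ∃ rd zd : ℕ, rd * d = r ∧ zd * d = z ∧ Nat.Coprime rd zd :=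
    ⟨r / d, z / d, Nat.div_mul_cancel hdr, Nat.div_mul_cancel hdz, by
      rw [hd]; exact Nat.coprime_div_gcd_div_gcd (hd ▸ hdpos)⟩
  have hrdR : (rd : ℝ) * d = r := by exact_mod_cast hrdd
  have hzdR : (zd : ℝ) * d = z := by exact_mod_cast hzdd
  have hrdpos : 0 < rd := by
    rcases Nat.eq_zero_or_pos rd with h | h
    · rw [h] at hrdd; simp at hrdd; omega
    · exact h
  obtain ⟨E, hEdef⟩ : ∃ E : ℝ, E = (r : ℝ) * (j : ℝ) - 2 ^ (m + ℓ) * (z : ℝ) := ⟨_, rfl⟩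
  have hEbound : |E| ≤ (r : ℝ) / 2 := by
    have h := abs_sub_round ((2 ^ (m + ℓ) * (z : ℝ)) / (r : ℝ))
    rw [← hj] at h
    have hmul : (r : ℝ) * ((2 ^ (m + ℓ) * (z : ℝ)) / (r : ℝ) - (j : ℝ)) = -E := by
      rw [hEdef]; field_simp; ring
    calc |E| = |(r : ℝ) * ((2 ^ (m + ℓ) * (z : ℝ)) / (r : ℝ) - (j : ℝ))| := by
          rw [hmul, abs_neg]
      _ = (r : ℝ) * |(2 ^ (m + ℓ) * (z : ℝ)) / (r : ℝ) - (j : ℝ)| := by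
          rw [abs_mul, abs_of_pos hr0]
      _ ≤ (r : ℝ) * (1 / 2) := mul_le_mul_of_nonneg_left h hr0.le
      _ = (r : ℝ) / 2 := by ring
  have hu1 : u.1 = E / d := by rw [hu, hEdef]
  have hu2 : u.2 = (r : ℝ) / (2 * d) := by rw [hu]
  have hN : (r : ℝ) ^ 2 < 2 ^ (m + ℓ) := by exact_mod_cast hrml
  have hrR : (2 : ℝ) ≤ (r : ℝ) := by exact_mod_cast hr
  have key1 : E / d = (rd : ℝ) * j - (zd : ℝ) * 2 ^ (m + ℓ) := by
    rw [div_eq_iff hdR.ne', hEdef]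
    linear_combination (-(j : ℝ)) * hrdR + (2 : ℝ) ^ (m + ℓ) * hzdR
  have key2 : (r : ℝ) / (2 * d) = (rd : ℝ) / 2 := by
    rw [div_eq_div_iff (by positivity) (two_ne_zero)]
    linear_combination (-2 : ℝ) * hrdR
  -- membership
  have hmem : u ∈ ShorLattice j m ℓ := by
    refine ⟨(rd : ℤ), -(zd : ℤ), ?_⟩
    rw [smul_pair, hu, Prod.ext_iff]
    constructor
    · show ((r : ℝ) * (j : ℝ) - 2 ^ (m + ℓ) * (z : ℝ)) / d = _
      rw [← hEdef]
      push_cast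
      rw [key1]; ring
    · show (r : ℝ) / (2 * d) = _
      push_cast
      rw [key2]
  -- u ≠ 0
  have hu2pos : 0 < u.2 := by rw [hu2]; positivity
  have hne : u ≠ 0 := by
    intro h
    rw [h] at hu2pos
    simp at hu2pos
  -- squared norm facts
  have hE2 : E ^ 2 ≤ (r : ℝ) ^ 2 / 4 := by
    have h' := mul_self_le_mul_self (abs_nonneg E) hEbound
    rw [pow_two, ← abs_mul_abs_self]
    nlinarith
  have hd1R : (1 : ℝ) ≤ d := by exact_mod_cast hdpos
  have husq : u.1 ^ 2 + u.2 ^ 2 ≤ (r : ℝ) ^ 2 / 2 := by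
    rw [hu1, hu2]
    have heq : (E / d) ^ 2 + ((r : ℝ) / (2 * d)) ^ 2 = (E ^ 2 + (r : ℝ) ^ 2 / 4) / d ^ 2 := by
      field_simp; ring
    rw [heq]
    have h1 : (E ^ 2 + (r : ℝ) ^ 2 / 4) / d ^ 2 ≤ E ^ 2 + (r : ℝ) ^ 2 / 4 :=
      div_le_self (by positivity) (by nlinarith)
    linarith
  -- the strict statement
  have hlt : ∀ w ∈ ShorLattice j m ℓ, w ≠ u → w ≠ -u → w ≠ 0 → enorm2 u < enorm2 w := by
    rintro w ⟨a, b, hwe⟩ hwu hwnu hw0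
    rw [smul_pair] at hwe
    have hw1 : w.1 = (a : ℝ) * (j : ℝ) + (b : ℝ) * 2 ^ (m + ℓ) := by rw [hwe]
    have hw2 : w.2 = (a : ℝ) / 2 := by rw [hwe]
    suffices hsq : u.1 ^ 2 + u.2 ^ 2 < w.1 ^ 2 + w.2 ^ 2 by
      unfold enorm2
      exact Real.sqrt_lt_sqrt (by positivity) hsq
    by_cases hk : a * (z : ℤ) + b * (r : ℤ) = 0
    · -- w is an integer multiple of u
      have hrZ : (rd : ℤ) * d = r := by exact_mod_cast hrdd
      have hzZ : (zd : ℤ) * d = z := by exact_mod_cast hzdd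
      have heq0 : a * (zd : ℤ) + b * rd = 0 := by
        have h' : (a * (zd : ℤ) + b * rd) * d = 0 := by
          linear_combination hk + a * hzZ + b * hrZ
        rcases mul_eq_zero.mp h' with h | h
        · exact h
        · exact absurd h (by exact_mod_cast hdpos.ne')
      have hdvd : (rd : ℤ) ∣ a * zd := ⟨-b, by linarith⟩
      have hcop : IsCoprime (rd : ℤ) (zd : ℤ) := by
        rw [Int.isCoprime_iff_gcd_eq_one, Int.gcd_natCast_natCast]
        exact cop
      obtain ⟨t, ht⟩ := hcop.dvd_of_dvd_mul_right hdvd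
      have hrdne : (rd : ℤ) ≠ 0 := by exact_mod_cast hrdpos.ne'
      have hb : b = -(t * zd) := by
        have h' : (rd : ℤ) * (t * zd + b) = 0 := by linear_combination heq0 - (zd : ℤ) * ht
        rcases mul_eq_zero.mp h' with h | h
        · exact absurd h hrdne
        · linarith
      have haR : (a : ℝ) = rd * t := by exact_mod_cast ht
      have hbR : (b : ℝ) = -(t * zd) := by exact_mod_cast hb
      have hw1' : w.1 = (t : ℝ) * (E / d) := by
        rw [hw1, haR, hbR, key1]; ring
      have hw2' : w.2 = (t : ℝ) * ((r : ℝ) / (2 * d)) := by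
        rw [hw2, haR, key2]; ring
      have ht0 : t ≠ 0 := by
        intro h
        apply hw0
        rw [Prod.ext_iff]
        constructor
        · rw [hw1', h]; simp
        · rw [hw2', h]; simp
      have ht1 : t ≠ 1 := by
        intro h
        apply hwu
        rw [Prod.ext_iff]
        constructor
        · rw [hw1', h, hu1]; simp
        · rw [hw2', h, hu2]; simp
      have htm1 : t ≠ -1 := by
        intro h
        apply hwnu
        rw [Prod.ext_iff]
        constructor
        · rw [hw1', h, Prod.fst_neg, hu1]; push_cast; ring
        · rw [hw2', h, Prod.snd_neg, hu2]; push_cast; ring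
      have h4 : (4 : ℝ) ≤ (t : ℝ) ^ 2 := by
        have h2t : t ≤ -2 ∨ 2 ≤ t := by omega
        rcases h2t with h | h
        · have h' : (t : ℝ) ≤ -2 := by exact_mod_cast h
          nlinarith
        · have h' : (2 : ℝ) ≤ (t : ℝ) := by exact_mod_cast h
          nlinarith
      rw [hw1', hw2', hu1, hu2]
      have h5 : 0 < ((r : ℝ) / (2 * (d : ℝ))) ^ 2 := by positivity
      nlinarith [sq_nonneg (E / (d : ℝ)), h4, h5]
    · -- k ≠ 0 : w is long
      have hkabs : 1 ≤ |((a * (z : ℤ) + b * (r : ℤ) : ℤ) : ℝ)| := by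
        have h1 : (1 : ℤ) ≤ |a * (z : ℤ) + b * (r : ℤ)| := Int.one_le_abs hk
        calc (1 : ℝ) = ((1 : ℤ) : ℝ) := by norm_num
          _ ≤ ((|a * (z : ℤ) + b * (r : ℤ)| : ℤ) : ℝ) := by exact_mod_cast h1
          _ = |((a * (z : ℤ) + b * (r : ℤ) : ℤ) : ℝ)| := by rw [Int.cast_abs]
      have hX : (r : ℝ) * w.1 =
          2 ^ (m + ℓ) * ((a * (z : ℤ) + b * (r : ℤ) : ℤ) : ℝ) + (a : ℝ) * E := by
        rw [hw1, hEdef]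
        push_cast
        ring
      have hkey := key_ineq (r : ℝ) ((2 : ℝ) ^ (m + ℓ)) w.1 (a : ℝ)
        ((a * (z : ℤ) + b * (r : ℤ) : ℤ) : ℝ) E hrR hN hEbound hkabs hX
      have hw2sq : w.2 ^ 2 = (a : ℝ) ^ 2 / 4 := by rw [hw2]; ring
      linarith
  refine ⟨hmem, hne, ?_, hlt⟩
  intro w hw hw0
  by_cases h1 : w = u
  · rw [h1]
  by_cases h2 : w = -u
  · rw [h2]
    have heq : enorm2 (-u) = enorm2 u := by simp [enorm2]
    rw [heq]
  · exact (hlt w hw h1 h2 hw0).le
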